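/- arXiv:1802.06442 — 2 statements merged into one kernel-verified Lean document; each statement's English description precedes it below -/
import Mathlib

section
/- Let K be a field and λ ∈ K. The set E of 3×3 matrices over K of the form [[c,0,0],[0,c,0],[a,b,c]] with a,b,c ∈ K forms a subring of the 3×3 matrix ring, and E contains no idempotent other than 0 and the identity matrix. -/
open Matrix

/-- Example 5.2: the set of matrices `[[c,0,0],[0,c,0],[a,b,c]]` is closed under the
ring operations of the 3×3 matrix ring (i.e. forms a subring) and contains no
idempotent other than `0` and `1`. -/
theorem stmt_1 {K : Type*} [Field K] (lam : K) :
    let E : Set (Matrix (Fin 3) (Fin 3) K) :=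
      {M | ∃ a b c : K, M = !![c, 0, 0; 0, c, 0; a, b, c]}
    (0 ∈ E) ∧ (1 ∈ E) ∧
    (∀ M ∈ E, ∀ N ∈ E, M + N ∈ E) ∧
    (∀ M ∈ E, -M ∈ E) ∧
    (∀ M ∈ E, ∀ N ∈ E, M * N ∈ E) ∧
    (∀ M ∈ E, M * M = M → M = 0 ∨ M = 1) := by
  intro E
  refine ⟨⟨0, 0, 0, by ext i j; fin_cases i <;> fin_cases j <;> simp [Matrix.vecHead, Matrix.vecTail]⟩,
    ⟨0, 0, 1, by ext i j; fin_cases i <;> fin_cases j <;> simp [Matrix.vecHead, Matrix.vecTail]⟩, ?_, ?_, ?_, ?_⟩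
  · rintro M ⟨a, b, c, rfl⟩ N ⟨a', b', c', rfl⟩
    exact ⟨a + a', b + b', c + c', by ext i j; fin_cases i <;> fin_cases j <;> simp [Matrix.vecHead, Matrix.vecTail]⟩
  · rintro M ⟨a, b, c, rfl⟩
    exact ⟨-a, -b, -c, by ext i j; fin_cases i <;> fin_cases j <;> simp [Matrix.vecHead, Matrix.vecTail]⟩
  · rintro M ⟨a, b, c, rfl⟩ N ⟨a', b', c', rfl⟩
    refine ⟨a * c' + c * a', b * c' + c * b', c * c', ?_⟩
    ext i j; fin_cases i <;> fin_cases j <;>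
      simp [Matrix.mul_apply, Fin.sum_univ_three, mul_comm]
  · rintro M ⟨a, b, c, rfl⟩ hM
    have h00 := congrFun (congrFun hM 0) 0
    have h20 := congrFun (congrFun hM 2) 0
    have h21 := congrFun (congrFun hM 2) 1
    simp [Matrix.mul_apply, Fin.sum_univ_three] at h00 h20 h21
    have hc : c * (c - 1) = 0 := by ring_nf; linear_combination h00
    rcases mul_eq_zero.mp hc with rfl | h
    · left
      have ha : a = 0 := by simpa using h20.symm
      have hb : b = 0 := by simpa using h21.symm
      subst ha; subst hb
      ext i j; fin_cases i <;> fin_cases j <;> simp [Matrix.vecHead, Matrix.vecTail]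
    · right
      have hc1 : c = 1 := by linear_combination h
      subst hc1
      have ha : a = 0 := by
        have h : a + a = a := by linear_combination h20
        exact add_eq_left.mp h
      have hb : b = 0 := by
        have h : b + b = b := by linear_combination h21
        exact add_eq_left.mp h
      subst ha; subst hb
      ext i j; fin_cases i <;> fin_cases j <;> simp [Matrix.vecHead, Matrix.vecTail]
end

section
/- Let K be a field, V a finite-dimensional K-vector space, and λ, μ, λ', μ' ∈ End_K(V). Suppose Φ₀, Φ₋₃ are endomorphisms of V⁴ and V² respectively (written as 4×4 and 2×2 block matrices of maps V → V) with Φ₀ = [[f,0,g,0],[0,f,0,0],[0,0,h,0],[0,g',0,h']] satisfying f = g + h = g' + h', and the block commutativity relation [[1,λ',0,0],[0,0,μ',1]] ∘ Φ₀ = Φ₋₃ ∘ [[1,λ,0,0],[0,0,μ,1]]. Then g = 0, g' = 0, f = h = h', Φ₋₃ = [[f,0],[0,f]], and λ' ∘ f = f ∘ λ and μ' ∘ f = f ∘ μ. -/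
open Matrix

/-- The final commutative-square computation in the proof of Lemma 7.4.  Block
matrices of linear maps are formalized as matrices over `Module.End K V`, where
matrix multiplication corresponds to composition of the induced maps on direct
powers of `V`. -/
theorem stmt_10 {K V : Type*} [Field K] [AddCommGroup V] [Module K V]
    [FiniteDimensional K V]
    (lam mu lam' mu' f g h g' h' : Module.End K V)
    (Phi3 : Matrix (Fin 2) (Fin 2) (Module.End K V))
    (hf1 : f = g + h) (hf2 : f = g' + h')
    (hcomm :
      (!![1, lam', 0, 0; 0, 0, mu', 1] : Matrix (Fin 2) (Fin 4) (Module.End K V)) *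
          (!![f, 0, g, 0; 0, f, 0, 0; 0, 0, h, 0; 0, g', 0, h'] :
            Matrix (Fin 4) (Fin 4) (Module.End K V)) =
        Phi3 * !![1, lam, 0, 0; 0, 0, mu, 1]) :
    g = 0 ∧ g' = 0 ∧ f = h ∧ f = h' ∧ Phi3 = !![f, 0; 0, f] ∧
      lam' * f = f * lam ∧ mu' * f = f * mu := by
  rw [← Matrix.ext_iff] at hcomm
  have e00 := hcomm 0 0
  have e01 := hcomm 0 1
  have e02 := hcomm 0 2
  have e03 := hcomm 0 3
  have e10 := hcomm 1 0
  have e11 := hcomm 1 1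
  have e12 := hcomm 1 2
  have e13 := hcomm 1 3
  simp [Matrix.mul_apply, Fin.sum_univ_succ] at e00 e01 e02 e03 e10 e11 e12 e13
  -- e00 : f = Phi3 0 0, e03 : Phi3 0 1 = 0, e02 : g = Phi3 0 1 * mu
  -- e10 : Phi3 1 0 = 0, e11 : g' = Phi3 1 0 * lam, e13 : h' = Phi3 1 1
  have hg : g = 0 := by rw [e02, ← e03, zero_mul]
  have hg' : g' = 0 := by rw [e11, ← e10, zero_mul]
  have hfh : f = h := by rw [hf1, hg, zero_add]
  have hfh' : f = h' := by rw [hf2, hg', zero_add]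
  refine ⟨hg, hg', hfh, hfh', ?_, ?_, ?_⟩
  · ext i j
    fin_cases i <;> fin_cases j <;>
      simp [← e00, ← e03, ← e10, ← e13, ← hfh']
  · rw [e01, ← e00]
  · rw [hfh, e12, ← e13, ← hfh', hfh]
end
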